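/- Let p = (p_1,...,p_N) be a fixed probability vector and, for a probability vector q = (q_1,...,q_N), let r be the convolution r_j = ∑_{k} p_{j+1-k} q_k (indices restricted to valid range, j = 1,...,2N-1), i.e., the distribution of the sum of independent variables with laws p and q supported on {1,...,N}. Then the function q ↦ H(r) - H(q) is convex in q, where H denotes Shannon entropy. -/

import Mathlib

/-- Shannon entropy of a pmf on a finite alphabet. -/
noncomputable def ent {α : Type*} [Fintype α] (p : α → ℝ) : ℝ :=
  -∑ x, p x * Real.log (p x)

/-- Convolution of two pmfs supported on `{0, …, N-1}` (i.e. `Fin N`,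
a 0-indexed version of `{1,…,N}`):  `r_j = ∑_{k+l=j} p_k q_l`, a pmf
supported on `{0, …, 2N-2}`.  This is the distribution of the sum of
independent variables with laws `p` and `q`. -/
noncomputable def convPQ (N : ℕ) (p q : Fin N → ℝ) : Fin (2 * N - 1) → ℝ :=
  fun j => ∑ k : Fin N, ∑ l : Fin N, if (k : ℕ) + l = (j : ℕ) then p k * q l else 0

/-!
Write `S = Y + Z`. Since `(Y, S)` determines `Z`, `H(S) - H(Z) = H(Y) - H(Y | S)`, and
`-H(Y | S) = ∑_{i,l} p_i q_l log (p_i q_l / r_{i+l})`. Both `p_i q_l` and `r_{i+l}` depend linearly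
on `q`, and `(a, b) ↦ a log (a / b)` is jointly convex, being the perspective of `x ↦ x log x`.
-/

open Real Finset

lemma convexOn_finset_sum {𝕜 E β ι : Type*} [Semiring 𝕜] [PartialOrder 𝕜] [AddCommMonoid E]
    [AddCommMonoid β] [PartialOrder β] [IsOrderedAddMonoid β] [SMul 𝕜 E] [Module 𝕜 β]
    {s : Set E} (hs : Convex 𝕜 s) (t : Finset ι) {f : ι → E → β}
    (hf : ∀ i ∈ t, ConvexOn 𝕜 s (f i)) : ConvexOn 𝕜 s fun x => ∑ i ∈ t, f i x := by
  convert Finset.sum_induction f (ConvexOn 𝕜 s) (fun _ _ => ConvexOn.add) (convexOn_const 0 hs) hf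
    using 1
  exact funext fun x => (Finset.sum_apply x t f).symm

def absContCone : Set (ℝ × ℝ) := {x | 0 ≤ x.1 ∧ 0 ≤ x.2 ∧ (x.2 = 0 → x.1 = 0)}

lemma mem_absContCone_of_le {a b : ℝ} (ha : 0 ≤ a) (hab : a ≤ b) : (a, b) ∈ absContCone :=
  ⟨ha, ha.trans hab, fun hb => le_antisymm (hb ▸ hab) ha⟩

lemma mul_fst_eq_zero_of_mem_absContCone {x : ℝ × ℝ} (hx : x ∈ absContCone) {u : ℝ}
    (h : u * x.2 = 0) : u * x.1 = 0 := by
  rcases mul_eq_zero.mp h with hu | hx2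
  · simp [hu]
  · simp [hx.2.2 hx2]

lemma mul_div_cancel_of_mem_absContCone {x : ℝ × ℝ} (hx : x ∈ absContCone) :
    x.2 * (x.1 / x.2) = x.1 := by
  rcases eq_or_ne x.2 0 with h | h
  · simp [h, hx.2.2 h]
  · exact mul_div_cancel₀ _ h

lemma convex_absContCone : Convex ℝ absContCone := by
  rintro x hx y hy u v hu hv -
  simp only [absContCone, Set.mem_ofPred_eq, Prod.fst_add, Prod.snd_add, Prod.smul_fst,
    Prod.smul_snd, smul_eq_mul]
  refine ⟨add_nonneg (mul_nonneg hu hx.1) (mul_nonneg hv hy.1),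
    add_nonneg (mul_nonneg hu hx.2.1) (mul_nonneg hv hy.2.1), fun h => ?_⟩
  obtain ⟨hux, hvy⟩ :=
    (add_eq_zero_iff_of_nonneg (mul_nonneg hu hx.2.1) (mul_nonneg hv hy.2.1)).mp h
  rw [mul_fst_eq_zero_of_mem_absContCone hx hux, mul_fst_eq_zero_of_mem_absContCone hy hvy,
    add_zero]

lemma ConvexOn.perspective {g : ℝ → ℝ} (hg : ConvexOn ℝ (Set.Ici 0) g) :
    ConvexOn ℝ absContCone fun x => x.2 * g (x.1 / x.2) := by
  refine ⟨convex_absContCone, fun x hx y hy u v hu hv huv => ?_⟩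
  simp only [Prod.fst_add, Prod.snd_add, Prod.smul_fst, Prod.smul_snd, smul_eq_mul]
  have hux := mul_nonneg hu hx.2.1
  have hvy := mul_nonneg hv hy.2.1
  rcases (add_nonneg hux hvy).eq_or_lt with hB | hB
  · obtain ⟨hux, hvy⟩ := (add_eq_zero_iff_of_nonneg hux hvy).mp hB.symm
    rw [← hB, zero_mul, ← mul_assoc, ← mul_assoc, hux, hvy]
    simp
  -- Jensen for `g` at `x.1 / x.2` and `y.1 / y.2`, with weights proportional to `u x.2`, `v y.2`.
  have hweight : ∀ w : ℝ, ∀ z ∈ absContCone,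
      w * z.2 / (u * x.2 + v * y.2) * (z.1 / z.2) = w * z.1 / (u * x.2 + v * y.2) := by
    intro w z hz
    rw [div_mul_eq_mul_div, mul_assoc, mul_div_cancel_of_mem_absContCone hz]
  have hjensen := hg.2 (div_nonneg hx.1 hx.2.1 : x.1 / x.2 ∈ Set.Ici 0)
    (div_nonneg hy.1 hy.2.1 : y.1 / y.2 ∈ Set.Ici 0)
    (div_nonneg hux hB.le) (div_nonneg hvy hB.le) (by rw [← add_div, div_self hB.ne'])
  rw [smul_eq_mul, smul_eq_mul, hweight u x hx, hweight v y hy, ← add_div] at hjensen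
  calc (u * x.2 + v * y.2) * g ((u * x.1 + v * y.1) / (u * x.2 + v * y.2))
      ≤ (u * x.2 + v * y.2) * (u * x.2 / (u * x.2 + v * y.2) * g (x.1 / x.2)
          + v * y.2 / (u * x.2 + v * y.2) * g (y.1 / y.2)) :=
        mul_le_mul_of_nonneg_left hjensen hB.le
    _ = u * (x.2 * g (x.1 / x.2)) + v * (y.2 * g (y.1 / y.2)) := by
        field_simp

noncomputable def klTerm (a b : ℝ) : ℝ := a * (log a - log b)

lemma convexOn_klTerm : ConvexOn ℝ absContCone fun x => klTerm x.1 x.2 := by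
  refine convexOn_mul_log.perspective.congr fun x hx => ?_
  simp only [klTerm]
  rcases eq_or_ne x.2 0 with h2 | h2
  · simp [h2, hx.2.2 h2]
  rcases eq_or_ne x.1 0 with h1 | h1
  · simp [h1]
  rw [← mul_assoc, mul_div_cancel_of_mem_absContCone hx, log_div h1 h2]

lemma ent_eq_sum_negMulLog {α : Type*} [Fintype α] (p : α → ℝ) :
    ent p = ∑ x, negMulLog (p x) := by
  simp only [ent, negMulLog, neg_mul, Finset.sum_neg_distrib]

lemma ent_mul {α β : Type*} [Fintype α] [Fintype β] {p : α → ℝ} {q : β → ℝ}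
    (hp : ∑ a, p a = 1) (hq : ∑ b, q b = 1) :
    ent (fun x : α × β => p x.1 * q x.2) = ent p + ent q := by
  simp only [ent_eq_sum_negMulLog, Fintype.sum_prod_type, negMulLog_mul, Finset.sum_add_distrib,
    ← Finset.sum_mul, ← Finset.mul_sum, hp, hq, one_mul]

noncomputable def convPQLinear (N : ℕ) (p : Fin N → ℝ) :
    (Fin N → ℝ) →ₗ[ℝ] (Fin (2 * N - 1) → ℝ) where
  toFun := convPQ N p
  map_add' q₁ q₂ := by
    ext j
    simp only [convPQ, Pi.add_apply, ← Finset.sum_add_distrib]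
    refine Finset.sum_congr rfl fun k _ => Finset.sum_congr rfl fun l _ => ?_
    split_ifs <;> ring
  map_smul' c q := by
    ext j
    simp only [convPQ, Pi.smul_apply, smul_eq_mul, Finset.mul_sum, RingHom.id_apply]
    refine Finset.sum_congr rfl fun k _ => Finset.sum_congr rfl fun l _ => ?_
    split_ifs <;> ring

section Convolution

variable {N : ℕ} {p q : Fin N → ℝ}

def sumIdx (i l : Fin N) : Fin (2 * N - 1) := ⟨i + l, by omega⟩

lemma sum_convPQ_mul (g : Fin (2 * N - 1) → ℝ) :
    ∑ j, convPQ N p q j * g j = ∑ i, ∑ l, p i * q l * g (sumIdx i l) := by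
  simp only [convPQ, Finset.sum_mul, ite_mul, zero_mul]
  rw [Finset.sum_comm]
  refine Finset.sum_congr rfl fun i _ => ?_
  rw [Finset.sum_comm]
  refine Finset.sum_congr rfl fun l _ => ?_
  rw [Finset.sum_eq_single_of_mem (sumIdx i l) (Finset.mem_univ _)
    (fun j _ hj => if_neg fun h => hj (Fin.ext h.symm))]
  exact if_pos rfl

lemma mul_le_convPQ (hp : ∀ k, 0 ≤ p k) (hq : ∀ k, 0 ≤ q k) (i l : Fin N) :
    p i * q l ≤ convPQ N p q (sumIdx i l) := by
  have hterm : ∀ k m : Fin N,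
      0 ≤ if (k : ℕ) + m = (sumIdx i l : ℕ) then p k * q m else 0 :=
    fun k m => ite_nonneg (mul_nonneg (hp k) (hq m)) le_rfl
  calc p i * q l = if (i : ℕ) + l = (sumIdx i l : ℕ) then p i * q l else 0 := (if_pos rfl).symm
    _ ≤ ∑ m : Fin N, if (i : ℕ) + m = (sumIdx i l : ℕ) then p i * q m else 0 :=
        Finset.single_le_sum (fun m _ => hterm i m) (Finset.mem_univ l)
    _ ≤ convPQ N p q (sumIdx i l) :=
        Finset.single_le_sum (fun k _ => Finset.sum_nonneg fun m _ => hterm k m)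
          (Finset.mem_univ i)

lemma ent_convPQ_sub_ent (hp : ∑ k, p k = 1) (hq : ∑ k, q k = 1) :
    ent (convPQ N p q) - ent q =
      ent p + ∑ i, ∑ l, klTerm (p i * q l) (convPQ N p q (sumIdx i l)) := by
  have hjoint : ∑ i, ∑ l, negMulLog (p i * q l) = ent p + ent q := by
    rw [← ent_mul hp hq, ent_eq_sum_negMulLog, Fintype.sum_prod_type]
  have hsum : ent (convPQ N p q) = -∑ i, ∑ l, p i * q l * log (convPQ N p q (sumIdx i l)) := by
    rw [ent, sum_convPQ_mul]
  simp only [klTerm, negMulLog, mul_sub, Finset.sum_sub_distrib, neg_mul,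
    Finset.sum_neg_distrib] at hjoint ⊢
  linarith

end Convolution

/-- For a fixed probability vector `p`, the map `q ↦ H(p * q) - H(q)` (with
`p * q` the convolution, i.e. the mutual information `I[Y+Z; Y]` for
independent `Y ~ p`, `Z ~ q`) is convex on the probability simplex. -/
theorem stmt11 (N : ℕ) (p : Fin N → ℝ)
    (hp0 : ∀ k, 0 ≤ p k) (hp1 : ∑ k, p k = 1) :
    ConvexOn ℝ {q : Fin N → ℝ | (∀ k, 0 ≤ q k) ∧ ∑ k, q k = 1}
      (fun q => ent (convPQ N p q) - ent q) := by
  have hS : Convex ℝ (stdSimplex ℝ (Fin N)) := convex_stdSimplex ℝ (Fin N)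
  have hterm (i l : Fin N) : ConvexOn ℝ (stdSimplex ℝ (Fin N))
      fun q => klTerm (p i * q l) (convPQ N p q (sumIdx i l)) :=
    (convexOn_klTerm.comp_linearMap ((p i • LinearMap.proj l).prod
      ((LinearMap.proj (sumIdx i l)).comp (convPQLinear N p)))).subset
      (fun q hq => mem_absContCone_of_le (mul_nonneg (hp0 i) (hq.1 l)) (mul_le_convPQ hp0 hq.1 i l))
      hS
  refine ((convexOn_const (ent p) hS).add (convexOn_finset_sum hS univ fun i _ =>
    convexOn_finset_sum hS univ fun l _ => hterm i l)).congr fun q hq => ?_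
  exact (ent_convPQ_sub_ent hp1 hq.2).symm
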